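/- The q-bookpile H(q) of an r-vertex graph H decomposes into q^r edge-disjoint copies of H: its edge set is the disjoint union of the edge sets of q^r subgraphs, each isomorphic to H. -/

import Mathlib

/-- A graph together with a labelling of its vertices by the vertices of an
original `r`-vertex graph, and, for each `e ∈ [q]^r`, the embedding of the
standard copy of the original graph indexed by `e`. -/
structure LGraph (q r : ℕ) where
  β : Type
  G : SimpleGraph β
  lab : β → Fin r
  copy : (Fin r → Fin q) → Fin r → β

/-- Vertex set after taking the `q`-book along all copies of the vertex `i`. -/
def StepVerts {q r : ℕ} (X : LGraph q r) (i : Fin r) : Type :=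
  {b : X.β // X.lab b = i} ⊕ (Fin q × {b : X.β // X.lab b ≠ i})

/-- Embedding of the `j`-th page into the book along copies of `i`. -/
def stepEmb {q r : ℕ} (X : LGraph q r) (i : Fin r) (j : Fin q) (b : X.β) :
    StepVerts X i :=
  if h : X.lab b = i then Sum.inl ⟨b, h⟩ else Sum.inr (j, ⟨b, h⟩)

lemma stepEmb_injective {q r : ℕ} (X : LGraph q r) (i : Fin r) (j : Fin q) :
    Function.Injective (stepEmb X i j) := by
  intro a b hab
  by_cases h1 : X.lab a = i <;> by_cases h2 : X.lab b = i
  · have ea : stepEmb X i j a = (Sum.inl ⟨a, h1⟩ : ({b : X.β // X.lab b = i} ⊕ (Fin q × {b : X.β // X.lab b ≠ i}))) := dif_pos h1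
    have eb : stepEmb X i j b = (Sum.inl ⟨b, h2⟩ : ({b : X.β // X.lab b = i} ⊕ (Fin q × {b : X.β // X.lab b ≠ i}))) := dif_pos h2
    rw [ea, eb] at hab
    exact congrArg Subtype.val (Sum.inl_injective hab)
  · have ea : stepEmb X i j a = (Sum.inl ⟨a, h1⟩ : ({b : X.β // X.lab b = i} ⊕ (Fin q × {b : X.β // X.lab b ≠ i}))) := dif_pos h1
    have eb : stepEmb X i j b = (Sum.inr (j, ⟨b, h2⟩) : ({b : X.β // X.lab b = i} ⊕ (Fin q × {b : X.β // X.lab b ≠ i}))) := dif_neg h2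
    rw [ea, eb] at hab; cases hab
  · have ea : stepEmb X i j a = (Sum.inr (j, ⟨a, h1⟩) : ({b : X.β // X.lab b = i} ⊕ (Fin q × {b : X.β // X.lab b ≠ i}))) := dif_neg h1
    have eb : stepEmb X i j b = (Sum.inl ⟨b, h2⟩ : ({b : X.β // X.lab b = i} ⊕ (Fin q × {b : X.β // X.lab b ≠ i}))) := dif_pos h2
    rw [ea, eb] at hab; cases hab
  · have ea : stepEmb X i j a = (Sum.inr (j, ⟨a, h1⟩) : ({b : X.β // X.lab b = i} ⊕ (Fin q × {b : X.β // X.lab b ≠ i}))) := dif_neg h1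
    have eb : stepEmb X i j b = (Sum.inr (j, ⟨b, h2⟩) : ({b : X.β // X.lab b = i} ⊕ (Fin q × {b : X.β // X.lab b ≠ i}))) := dif_neg h2
    rw [ea, eb] at hab
    exact congrArg Subtype.val (congrArg Prod.snd (Sum.inr_injective hab))

/-- One step of the bookpile construction: the `q`-book along all copies
of the vertex `i`. -/
def pileStep {q r : ℕ} (X : LGraph q r) (i : Fin r) : LGraph q r where
  β := StepVerts X i
  G := { Adj := fun a b => ∃ (j : Fin q) (u v : X.β),
            X.G.Adj u v ∧ a = stepEmb X i j u ∧ b = stepEmb X i j v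
         symm := ⟨by rintro a b ⟨j, u, v, h, ha, hb⟩; exact ⟨j, v, u, h.symm, hb, ha⟩⟩
         loopless := ⟨by
           rintro a ⟨j, u, v, h, ha, hb⟩
           exact X.G.irrefl
             (by rwa [stepEmb_injective X i j (ha.symm.trans hb)] at h)⟩ }
  lab := Sum.elim (fun b => X.lab b.1) (fun p => X.lab p.2.1)
  copy := fun e v => stepEmb X i (e i) (X.copy e v)

/-- The `q`-bookpile `H(q)` of an `r`-vertex graph `H`: iterate the book
operation along the copies of each of the `r` vertices of `H`. -/
def bookpile {r : ℕ} (H : SimpleGraph (Fin r)) (q : ℕ) : LGraph q r :=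
  (List.finRange r).foldl pileStep ⟨Fin r, H, id, fun _ v => v⟩

/-
The proof tracks the invariant that after the vertices of a set `s` have been
processed, the standard copy indexed by `e` depends only on `e` restricted to `s`, every standard
copy is an induced copy of `H`, and every edge lies in a standard copy whose index is determined
on `s` by the edge. A book step along `i ∉ s` keeps this with `s` replaced by `insert i s`: an
edge of page `j` comes from an edge of some copy `e`, and lies in the copy `Function.update e i j`;
conversely, an edge of `H` has an end `u ≠ i`, and the copy of `u` is duplicated by the step, so
the page, and hence `e i`, is read off the edge.
-/

section Step

variable {q r : ℕ} (X : LGraph q r) (i : Fin r)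

lemma stepEmb_of_lab_eq (j : Fin q) {b : X.β} (h : X.lab b = i) :
    stepEmb X i j b = (Sum.inl ⟨b, h⟩ : StepVerts X i) :=
  dif_pos h

lemma stepEmb_of_lab_ne (j : Fin q) {b : X.β} (h : X.lab b ≠ i) :
    stepEmb X i j b = (Sum.inr (j, ⟨b, h⟩) : StepVerts X i) :=
  dif_neg h

lemma lab_stepEmb (j : Fin q) (b : X.β) : (pileStep X i).lab (stepEmb X i j b) = X.lab b := by
  by_cases h : X.lab b = i
  · rw [stepEmb_of_lab_eq X i j h]; rfl
  · rw [stepEmb_of_lab_ne X i j h]; rfl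

variable {X i}

lemma eq_and_page_eq_of_stepEmb_eq {j j' : Fin q} {b b' : X.β}
    (h : stepEmb X i j b = stepEmb X i j' b') : b = b' ∧ (X.lab b ≠ i → j = j') := by
  by_cases hb : X.lab b = i <;> by_cases hb' : X.lab b' = i
  · rw [stepEmb_of_lab_eq X i j hb, stepEmb_of_lab_eq X i j' hb'] at h
    exact ⟨congrArg Subtype.val (Sum.inl_injective h), absurd hb⟩
  · rw [stepEmb_of_lab_eq X i j hb, stepEmb_of_lab_ne X i j' hb'] at h
    cases h
  · rw [stepEmb_of_lab_ne X i j hb, stepEmb_of_lab_eq X i j' hb'] at h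
    cases h
  · rw [stepEmb_of_lab_ne X i j hb, stepEmb_of_lab_ne X i j' hb'] at h
    obtain ⟨hj, hbb'⟩ := Prod.ext_iff.1 (Sum.inr_injective h)
    exact ⟨congrArg Subtype.val hbb', fun _ => hj⟩

lemma pileStep_copy (e : Fin r → Fin q) (v : Fin r) :
    (pileStep X i).copy e v = stepEmb X i (e i) (X.copy e v) :=
  rfl

lemma pileStep_adj_iff {a b : (pileStep X i).β} :
    (pileStep X i).G.Adj a b ↔
      ∃ (j : Fin q) (u v : X.β), X.G.Adj u v ∧ a = stepEmb X i j u ∧ b = stepEmb X i j v :=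
  Iff.rfl

end Step

structure PileInv {r : ℕ} (H : SimpleGraph (Fin r)) (q : ℕ) (X : LGraph q r)
    (s : Set (Fin r)) : Prop where
  lab_copy : ∀ e v, X.lab (X.copy e v) = v
  copy_congr : ∀ e e', Set.EqOn e e' s → X.copy e = X.copy e'
  adj_copy_iff : ∀ e u v, X.G.Adj (X.copy e u) (X.copy e v) ↔ H.Adj u v
  exists_copy_of_adj : ∀ a b, X.G.Adj a b → ∃ e u v, H.Adj u v ∧ a = X.copy e u ∧ b = X.copy e v
  eqOn_of_copy_eq : ∀ e e' u v u' v', H.Adj u v →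
    X.copy e u = X.copy e' u' → X.copy e v = X.copy e' v' → Set.EqOn e e' s

namespace PileInv

variable {q r : ℕ} {H : SimpleGraph (Fin r)} {X : LGraph q r} {s : Set (Fin r)}

lemma base (hq : 0 < q) : PileInv H q ⟨Fin r, H, id, fun _ v => v⟩ ∅ where
  lab_copy _ _ := rfl
  copy_congr _ _ _ := rfl
  adj_copy_iff _ _ _ := Iff.rfl
  exists_copy_of_adj a b hab := ⟨fun _ => ⟨0, hq⟩, a, b, hab, rfl, rfl⟩
  eqOn_of_copy_eq e e' _ _ _ _ _ _ _ := Set.eqOn_empty e e'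

lemma pileStep (h : PileInv H q X s) {i : Fin r} (hi : i ∉ s) :
    PileInv H q (pileStep X i) (insert i s) where
  lab_copy e v := (lab_stepEmb X i _ _).trans (h.lab_copy e v)
  copy_congr e e' hee := by
    funext v
    rw [pileStep_copy, pileStep_copy, hee (Set.mem_insert i s), h.copy_congr e e' (hee.mono (Set.subset_insert i s))]
  adj_copy_iff e u v := by
    refine ⟨?_, fun huv => ⟨e i, _, _, (h.adj_copy_iff e u v).2 huv, rfl, rfl⟩⟩
    rintro ⟨j, u₀, v₀, huv₀, hu, hv⟩
    rw [← (eq_and_page_eq_of_stepEmb_eq hu).1, ← (eq_and_page_eq_of_stepEmb_eq hv).1] at huv₀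
    exact (h.adj_copy_iff e u v).1 huv₀
  exists_copy_of_adj a b hab := by
    obtain ⟨j, u₀, v₀, huv₀, rfl, rfl⟩ := pileStep_adj_iff.1 hab
    obtain ⟨e, u, v, huv, rfl, rfl⟩ := h.exists_copy_of_adj u₀ v₀ huv₀
    have hcopy : X.copy (Function.update e i j) = X.copy e :=
      h.copy_congr _ _ fun k hk => Function.update_of_ne (ne_of_mem_of_not_mem hk hi) j e
    refine ⟨Function.update e i j, u, v, huv, ?_, ?_⟩ <;>
      rw [pileStep_copy, Function.update_self, hcopy]
  eqOn_of_copy_eq e e' u v u' v' huv hu hv := by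
    obtain ⟨hu, hpu⟩ := eq_and_page_eq_of_stepEmb_eq hu
    obtain ⟨hv, hpv⟩ := eq_and_page_eq_of_stepEmb_eq hv
    rw [Set.insert_eq]
    refine Set.EqOn.union (Set.eqOn_singleton.2 ?_) (h.eqOn_of_copy_eq e e' u v u' v' huv hu hv)
    rw [h.lab_copy] at hpu hpv
    by_cases hui : u = i
    · exact hpv fun hvi => huv.ne (hui.trans hvi.symm)
    · exact hpu hui

lemma foldl (h : PileInv H q X s) {L : List (Fin r)} (hL : L.Nodup) (hLs : ∀ k ∈ L, k ∉ s) :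
    PileInv H q (L.foldl _root_.pileStep X) (s ∪ {k | k ∈ L}) := by
  induction L generalizing X s with
  | nil => simpa using h
  | cons i L ih =>
    rw [List.nodup_cons] at hL
    have h' := ih (h.pileStep (hLs i List.mem_cons_self)) hL.2 fun k hk hks =>
      (Set.mem_insert_iff.1 hks).elim (fun hki => hL.1 (hki ▸ hk))
        (hLs k (List.mem_cons_of_mem i hk))
    have hs : s ∪ {k | k ∈ i :: L} = insert i s ∪ {k | k ∈ L} := by
      ext k
      simp only [Set.mem_union, Set.mem_insert_iff, Set.mem_ofPred_eq, List.mem_cons]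
      tauto
    rwa [List.foldl_cons, hs]

end PileInv

lemma pileInv_bookpile {r : ℕ} (H : SimpleGraph (Fin r)) {q : ℕ} (hq : 0 < q) :
    PileInv H q (bookpile H q) Set.univ := by
  have hs : ∅ ∪ {k | k ∈ List.finRange r} = Set.univ := by simp [List.mem_finRange]
  rw [← hs]
  exact (PileInv.base hq).foldl (List.nodup_finRange r) fun k _ => Set.notMem_empty k

/-- the `q`-bookpile of an `r`-vertex graph `H` decomposes into
`q^r` edge-disjoint copies of `H`: each standard-copy map is an embedding of
`H` inducing a copy of `H`, and every edge of `H(q)` lies in exactly one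
standard copy. -/
theorem bookpile_decomposition {r : ℕ} (H : SimpleGraph (Fin r)) (q : ℕ) (hq : 0 < q) :
    (∀ e : Fin r → Fin q, Function.Injective ((bookpile H q).copy e)) ∧
    (∀ (e : Fin r → Fin q) (u v : Fin r),
        (bookpile H q).G.Adj ((bookpile H q).copy e u) ((bookpile H q).copy e v) ↔
          H.Adj u v) ∧
    (∀ a b : (bookpile H q).β, (bookpile H q).G.Adj a b →
        ∃! e : Fin r → Fin q, ∃ u v : Fin r,
          H.Adj u v ∧ a = (bookpile H q).copy e u ∧ b = (bookpile H q).copy e v) := by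
  have h := pileInv_bookpile H hq
  refine ⟨fun e => Function.LeftInverse.injective (h.lab_copy e), h.adj_copy_iff, ?_⟩
  intro a b hab
  obtain ⟨e, u, v, huv, ha, hb⟩ := h.exists_copy_of_adj a b hab
  refine ⟨e, ⟨u, v, huv, ha, hb⟩, ?_⟩
  rintro e' ⟨u', v', huv', ha', hb'⟩
  exact (Set.eqOn_univ e' e).1 (h.eqOn_of_copy_eq e' e u' v' u v huv' (ha'.symm.trans ha)
    (hb'.symm.trans hb))
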